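/- arXiv:2511.01838 — 7 statements merged into one kernel-verified Lean document; each statement's English description precedes it below -/
import Mathlib

section
/- (Proposition 1: incoherence of the concatenated code.) Let 1 ≤ K ≤ q and let f, g ∈ F_q[X] be distinct polynomials of degree < K. Then |⟨v_f, v_g⟩| ≤ (K−1)·q, and consequently |⟨v_f, v_g⟩| / (‖v_f‖₂ · ‖v_g‖₂) ≤ (K−1)/q = 1 − (N−K+1)/N, where N = q. That is, the concatenated Reed–Solomon ∘ Hadamard code is (1 − (N−K+1)/N)-incoherent. -/
/-!
Write `ψ(y) = ζ ^ Tr(y)`, an additive character of `F_q`; it is nontrivial because the trace of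
a finite (hence separable) extension is surjective, so it is primitive. Then
`v_f(x, b) · conj(v_g(x, b)) = ψ(b · (f - g)(x))`, and summing over `b` first gives `q` when `x`
is a root of `f - g` and `0` otherwise. Hence `⟨v_f, v_g⟩ = q · #{roots of f - g}`, and
`f - g ≠ 0` has at most `K - 1` roots. Every entry of a codeword has modulus one, so
`‖v_f‖₂ = ‖v_g‖₂ = q`.
-/

open Finset Polynomial

namespace AddChar

lemma isPrimitive_compAddMonoidHom_trace {K L R : Type*} [Field K] [Field L] [Algebra K L]
    [CommMonoid R] [FiniteDimensional K L] [Algebra.IsSeparable K L] {ψ : AddChar K R}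
    (hψ : ψ ≠ 1) : (ψ.compAddMonoidHom (Algebra.trace K L).toAddMonoidHom).IsPrimitive := by
  refine IsPrimitive.of_ne_one fun h ↦ hψ ?_
  ext a
  obtain ⟨y, rfl⟩ := Algebra.trace_surjective K L a
  exact DFunLike.congr_fun h y

lemma zmodChar_ne_one {C : Type*} [CommMonoid C] {n : ℕ} [NeZero n] (hn : 1 < n) {ζ : C}
    (hζ : IsPrimitiveRoot ζ n) : zmodChar n hζ.pow_eq_one ≠ 1 := by
  intro h
  have h1 := zmodChar_apply' hζ.pow_eq_one 1
  rw [h, Nat.cast_one, one_apply, pow_one] at h1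
  exact hζ.ne_one hn h1.symm

lemma sum_prod_mulShift_eq_card_mul {X R R' : Type*} [Fintype X] [CommRing R] [Fintype R]
    [DecidableEq R] [CommRing R'] [IsDomain R'] {ψ : AddChar R R'} (hψ : ψ.IsPrimitive)
    (h : X → R) : ∑ xb : X × R, ψ (xb.2 * h xb.1) = #{x | h x = 0} * Fintype.card R := by
  simp_rw [Fintype.sum_prod_type, sum_mulShift _ hψ, Nat.cast_ite, Nat.cast_zero, ← sum_filter,
    sum_const, nsmul_eq_mul]

lemma sum_normSq_apply {G X : Type*} [AddCommGroup G] [Finite G] [Fintype X]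
    (ψ : AddChar G ℂ) (h : X → G) : ∑ x, Complex.normSq (ψ (h x)) = Fintype.card X := by
  simp [← Complex.sq_norm, ψ.norm_apply]

end AddChar

lemma Polynomial.card_filter_eval_eq_zero_le_natDegree {R : Type*} [CommRing R] [IsDomain R]
    [Fintype R] [DecidableEq R] {h : R[X]} (h0 : h ≠ 0) : #{x | h.eval x = 0} ≤ h.natDegree :=
  card_le_degree_of_subset_roots fun _ hx ↦ (mem_roots h0).2 (mem_filter.1 hx).2

theorem stmt2_general (p : ℕ) [Fact p.Prime]
    (F : Type) [Field F] [Fintype F] [Algebra (ZMod p) F]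
    (ζ : ℂ) (hζ : ζ = Complex.exp (2 * Real.pi * Complex.I / p))
    (K : ℕ)
    (v : Polynomial F → F × F → ℂ)
    (hv : ∀ (f : Polynomial F) (xb : F × F),
      v f xb = ζ ^ (Algebra.trace (ZMod p) F (Polynomial.eval xb.1 f * xb.2)).val)
    (f g : Polynomial F) (hfg : f ≠ g) (hf : f.degree < K) (hg : g.degree < K) :
    ‖∑ xb : F × F, v f xb * (starRingEnd ℂ) (v g xb)‖
      ≤ ((K : ℝ) - 1) * (Fintype.card F : ℝ) ∧
    ‖∑ xb : F × F, v f xb * (starRingEnd ℂ) (v g xb)‖ /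
        (Real.sqrt (∑ xb : F × F, Complex.normSq (v f xb)) *
          Real.sqrt (∑ xb : F × F, Complex.normSq (v g xb)))
      ≤ ((K : ℝ) - 1) / (Fintype.card F : ℝ) ∧
    ((K : ℝ) - 1) / (Fintype.card F : ℝ)
      = 1 - ((Fintype.card F : ℝ) - (K : ℝ) + 1) / (Fintype.card F : ℝ) := by
  classical
  set q := Fintype.card F
  have hq : (0 : ℝ) < q := Nat.cast_pos.2 Fintype.card_pos
  have hζp : IsPrimitiveRoot ζ p := hζ ▸ Complex.isPrimitiveRoot_exp p (NeZero.ne p)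
  set ψ := (AddChar.zmodChar p hζp.pow_eq_one).compAddMonoidHom
    (Algebra.trace (ZMod p) F).toAddMonoidHom
  have hψ : ψ.IsPrimitive := AddChar.isPrimitive_compAddMonoidHom_trace
    (AddChar.zmodChar_ne_one (Fact.out : p.Prime).one_lt hζp)
  have hvψ : ∀ h xb, v h xb = ψ (eval xb.1 h * xb.2) := hv
  have hinner :
      ∑ xb : F × F, v f xb * starRingEnd ℂ (v g xb) = #{x | (f - g).eval x = 0} * q := by
    rw [← AddChar.sum_prod_mulShift_eq_card_mul hψ]
    refine Fintype.sum_congr _ _ fun xb ↦ ?_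
    rw [hvψ, hvψ, ← AddChar.map_neg_eq_conj, ← AddChar.map_add_eq_mul, eval_sub]
    ring_nf
  have hnorm : ∀ h, √(∑ xb : F × F, Complex.normSq (v h xb)) = q := fun h ↦ by
    simp_rw [hvψ, AddChar.sum_normSq_apply, Fintype.card_prod, Nat.cast_mul]
    exact Real.sqrt_mul_self hq.le
  have hroots : (#{x | (f - g).eval x = 0} : ℝ) ≤ K - 1 := by
    have hfg0 : f - g ≠ 0 := sub_ne_zero.2 hfg
    have hdeg : (f - g).natDegree < K :=
      (natDegree_lt_iff_degree_lt hfg0).2 ((degree_sub_le f g).trans_lt (max_lt hf hg))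
    rw [le_sub_iff_add_le]
    exact_mod_cast (card_filter_eval_eq_zero_le_natDegree hfg0).trans_lt hdeg
  have hbound : ‖∑ xb : F × F, v f xb * starRingEnd ℂ (v g xb)‖ ≤ (K - 1) * q := by
    rw [hinner, norm_mul, Complex.norm_natCast, Complex.norm_natCast]
    gcongr
  refine ⟨hbound, ?_, by field_simp; ring⟩
  calc _ ≤ ((K : ℝ) - 1) * q / (q * q) := by rw [hnorm, hnorm]; gcongr
    _ = (K - 1) / q := by field_simp

/-- Proposition 1: incoherence of the concatenated RS ∘ Hadamard code.
For distinct polynomials `f, g` of degree `< K` (with `1 ≤ K ≤ q`),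
`|⟨v_f, v_g⟩| ≤ (K−1)·q`, and hence
`|⟨v_f, v_g⟩| / (‖v_f‖₂‖v_g‖₂) ≤ (K−1)/q = 1 − (N−K+1)/N` with `N = q`. -/
theorem stmt2 (p : ℕ) [Fact p.Prime] (m : ℕ) (hm : 1 ≤ m)
    (F : Type) [Field F] [Fintype F] [Algebra (ZMod p) F]
    (hcard : Fintype.card F = p ^ m)
    (ζ : ℂ) (hζ : ζ = Complex.exp (2 * Real.pi * Complex.I / p))
    (K : ℕ) (hK1 : 1 ≤ K) (hKq : K ≤ Fintype.card F)
    (v : Polynomial F → F × F → ℂ)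
    (hv : ∀ (f : Polynomial F) (xb : F × F),
      v f xb = ζ ^ (Algebra.trace (ZMod p) F (Polynomial.eval xb.1 f * xb.2)).val)
    (f g : Polynomial F) (hfg : f ≠ g) (hf : f.degree < K) (hg : g.degree < K) :
    ‖∑ xb : F × F, v f xb * (starRingEnd ℂ) (v g xb)‖
      ≤ ((K : ℝ) - 1) * (Fintype.card F : ℝ) ∧
    ‖∑ xb : F × F, v f xb * (starRingEnd ℂ) (v g xb)‖ /
        (Real.sqrt (∑ xb : F × F, Complex.normSq (v f xb)) *
          Real.sqrt (∑ xb : F × F, Complex.normSq (v g xb)))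
      ≤ ((K : ℝ) - 1) / (Fintype.card F : ℝ) ∧
    ((K : ℝ) - 1) / (Fintype.card F : ℝ)
      = 1 - ((Fintype.card F : ℝ) - (K : ℝ) + 1) / (Fintype.card F : ℝ) :=
  stmt2_general p F ζ hζ K v hv f g hfg hf hg
end

section
/- (Bounded-ℓ1 deviation of the Hadamard decoder under lattice-shifted noise; key step of Proposition 2.) Let h, v ∈ ℤ^n with ‖v‖₁ = Σ_j |v_j| ≤ r, and let e' ∈ ℂ^n with ‖e'‖₂ < √n / 2. Set s = H h + H v + e' (i.e., the noise is e = Hv + e'). Then the rounding decoder — which writes t = (1/n)H†s and rounds Re(t_j) to the nearest integer for each j — outputs the vector h' = h + v; in particular the output histogram satisfies ‖h' − h‖₁ ≤ r. -/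
/-!
Since `Hᴴ H = n I`, the decoder computes `t = h + v + (1/n) Hᴴ e'`. By Cauchy–Schwarz each
coordinate of `Hᴴ e'` has modulus at most `‖H_j‖ ‖e'‖ < √n · √n / 2 = n / 2`, so the real part
of `t_j` lies within `1/2` of the integer `h_j + v_j` and rounds to it.
-/

open Matrix

section
variable {𝕜 m n : Type*} [RCLike 𝕜] [Fintype m]

theorem Matrix.conjTranspose_mulVec_apply_eq_inner (A : Matrix m n 𝕜) (x : m → 𝕜) (j : n) :
    (Aᴴ *ᵥ x) j = inner 𝕜 (WithLp.toLp 2 (Aᵀ j) : EuclideanSpace 𝕜 m) (WithLp.toLp 2 x) := by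
  rw [EuclideanSpace.inner_toLp_toLp, dotProduct_comm]
  rfl

theorem Matrix.conjTranspose_mul_self_apply_eq_norm_sq (A : Matrix m n 𝕜) (j : n) :
    (Aᴴ * A) j j = (‖(WithLp.toLp 2 (Aᵀ j) : EuclideanSpace 𝕜 m)‖ : 𝕜) ^ 2 := by
  rw [← inner_self_eq_norm_sq_to_K, EuclideanSpace.inner_toLp_toLp, dotProduct_comm]
  rfl

theorem Matrix.norm_conjTranspose_mulVec_apply_le [DecidableEq n] {c : ℝ}
    {A : Matrix m n 𝕜} (hA : Aᴴ * A = (c : 𝕜) • 1) (x : m → 𝕜) (j : n) :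
    ‖(Aᴴ *ᵥ x) j‖ ≤ √c * ‖(WithLp.toLp 2 x : EuclideanSpace 𝕜 m)‖ := by
  have hcol : ‖(WithLp.toLp 2 (Aᵀ j) : EuclideanSpace 𝕜 m)‖ = √c := by
    have := A.conjTranspose_mul_self_apply_eq_norm_sq j
    rw [hA, smul_apply, one_apply_eq, smul_eq_mul, mul_one, ← RCLike.ofReal_pow,
      RCLike.ofReal_inj] at this
    rw [this, Real.sqrt_sq (norm_nonneg _)]
  rw [conjTranspose_mulVec_apply_eq_inner, ← hcol]
  exact norm_inner_le_norm _ _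

theorem Matrix.inv_smul_conjTranspose_mulVec_mulVec_add [Fintype n] [DecidableEq n] {c : 𝕜}
    (hc : c ≠ 0) {A : Matrix m n 𝕜} (hA : Aᴴ * A = c • 1) (a : n → 𝕜) (e : m → 𝕜) :
    c⁻¹ • Aᴴ *ᵥ (A *ᵥ a + e) = a + c⁻¹ • Aᴴ *ᵥ e := by
  rw [mulVec_add, mulVec_mulVec, hA, smul_mulVec, one_mulVec, smul_add, inv_smul_smul₀ hc]
end

theorem round_intCast_add_of_abs_lt {α : Type*} [Field α] [LinearOrder α] [IsStrictOrderedRing α]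
    [FloorRing α] (k : ℤ) {x : α} (hx : |x| < 1 / 2) : round ((k : α) + x) = k := by
  rw [round_intCast_add, add_eq_left, round_eq_zero_iff]
  exact ⟨by linarith [neg_abs_le x], by linarith [le_abs_self x]⟩

theorem stmt6_general (n : ℕ)
    (H : Matrix (Fin n) (Fin n) ℂ)
    (hH : Hᴴ * H = (n : ℂ) • (1 : Matrix (Fin n) (Fin n) ℂ))
    (h v : Fin n → ℤ) (r : ℕ)
    (hv : (∑ j, (v j).natAbs) ≤ r)
    (e' : Fin n → ℂ)
    (he' : Real.sqrt (∑ i, Complex.normSq (e' i)) < Real.sqrt n / 2)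
    (s t : Fin n → ℂ)
    (hs : s = H.mulVec (fun j => (h j : ℂ)) + H.mulVec (fun j => (v j : ℂ)) + e')
    (ht : t = (1 / (n : ℂ)) • Hᴴ.mulVec s)
    (h' : Fin n → ℤ)
    (hh' : ∀ j, h' j = round ((t j).re)) :
    (∀ j, h' j = h j + v j) ∧ (∑ j, (h' j - h j).natAbs) ≤ r := by
  have hdecode : ∀ j, h' j = h j + v j := by
    intro j
    have hn : (0 : ℝ) < n := by exact_mod_cast j.pos
    have he'_norm : ‖(WithLp.toLp 2 e' : EuclideanSpace ℂ (Fin n))‖ < √n / 2 := by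
      simpa only [EuclideanSpace.norm_eq, Complex.sq_norm] using he'
    have hnoise : ‖(n : ℂ)⁻¹ * (Hᴴ *ᵥ e') j‖ < 1 / 2 :=
      calc ‖(n : ℂ)⁻¹ * (Hᴴ *ᵥ e') j‖ = ‖(Hᴴ *ᵥ e') j‖ / n := by
            rw [norm_mul, norm_inv, Complex.norm_natCast, inv_mul_eq_div]
        _ ≤ √n * ‖(WithLp.toLp 2 e' : EuclideanSpace ℂ (Fin n))‖ / n := by
            gcongr
            exact norm_conjTranspose_mulVec_apply_le (by rwa [RCLike.ofReal_natCast]) e' j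
        _ < √n * (√n / 2) / n := by gcongr
        _ = 1 / 2 := by rw [← mul_div_assoc, Real.mul_self_sqrt hn.le]; field_simp
    have htj : t j = ((h j + v j : ℤ) : ℂ) + (n : ℂ)⁻¹ * (Hᴴ *ᵥ e') j := by
      rw [ht, hs, ← mulVec_add, one_div,
        inv_smul_conjTranspose_mulVec_mulVec_add (by exact_mod_cast hn.ne') hH]
      simp
    rw [hh', htj, Complex.add_re, Complex.intCast_re, round_intCast_add_of_abs_lt]
    exact (Complex.abs_re_le_norm _).trans_lt hnoise
  refine ⟨hdecode, ?_⟩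
  simpa only [hdecode, add_sub_cancel_left] using hv

/-- Bounded-ℓ1 deviation of the Hadamard decoder under lattice-shifted
noise. Let `h, v ∈ ℤⁿ` with `‖v‖₁ ≤ r`, `e' ∈ ℂⁿ` with `‖e'‖₂ < √n/2`, and
`s = Hh + Hv + e'`. Then the rounding decoder (`t = (1/n)Hᴴs`, round `Re(t_j)`)
outputs `h' = h + v`; in particular `‖h' − h‖₁ ≤ r`. -/
theorem stmt6 (n : ℕ) (hn : 1 ≤ n)
    (H : Matrix (Fin n) (Fin n) ℂ)
    (hH : Hᴴ * H = (n : ℂ) • (1 : Matrix (Fin n) (Fin n) ℂ))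
    (h v : Fin n → ℤ) (r : ℕ)
    (hv : (∑ j, (v j).natAbs) ≤ r)
    (e' : Fin n → ℂ)
    (he' : Real.sqrt (∑ i, Complex.normSq (e' i)) < Real.sqrt n / 2)
    (s t : Fin n → ℂ)
    (hs : s = H.mulVec (fun j => (h j : ℂ)) + H.mulVec (fun j => (v j : ℂ)) + e')
    (ht : t = (1 / (n : ℂ)) • Hᴴ.mulVec s)
    (h' : Fin n → ℤ)
    (hh' : ∀ j, h' j = round ((t j).re)) :
    (∀ j, h' j = h j + v j) ∧ (∑ j, (h' j - h j).natAbs) ≤ r :=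
  stmt6_general n H hH h v r hv e' he' s t hs ht h' hh'
end

section
/- (Lemma 2 / lemma:ellkminusone.) Let f_1, …, f_t be polynomials of degree < K with Reed–Solomon codewords c^(1), …, c^(t), let Y be their indicator matrix, and let ḡ be a polynomial of degree < K whose Reed–Solomon codeword c̄ = c_ḡ satisfies c̄ ∉ {c^(1), …, c^(t)}. Then |supp(W_{c̄}) ∩ supp(Y)| ≤ t(K−1); equivalently, ⟨W_{c̄}, Y⟩ ≤ t(K−1), where supp denotes the set of positions (α, j) holding a nonzero entry. -/
/-!
Two distinct polynomials of degree `< K` agree in at most `K - 1` points, since their difference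
is a nonzero polynomial of degree `≤ K - 1`. A position `(α, j)` lies in the support of both
`W_c̄` and `Y` exactly when `α = c̄ⱼ` and `c̄ⱼ = c⁽ⁱ⁾ⱼ` for some `i`; it is determined by `j`, and
the union over `i` of the agreement sets of `c̄` with `c⁽ⁱ⁾` has at most `t (K - 1)` elements.
-/

open Finset Polynomial

section ReedSolomon

variable {F ι : Type*} [Field F] [DecidableEq F] [Fintype ι] {x : ι → F}

theorem card_filter_eval_eq_le_natDegree_sub (hx : Function.Injective x) {p q : F[X]}
    (hpq : p ≠ q) : #{j | p.eval (x j) = q.eval (x j)} ≤ (p - q).natDegree := by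
  rw [← card_image_of_injective _ hx]
  refine card_le_degree_of_subset_roots fun a ha => ?_
  obtain ⟨j, hj, rfl⟩ := mem_image.1 ha
  rw [mem_roots (sub_ne_zero.2 hpq), IsRoot, eval_sub, sub_eq_zero]
  exact (mem_filter.1 hj).2

theorem card_filter_eval_eq_le_of_degree_lt (hx : Function.Injective x) {p q : F[X]} {K : ℕ}
    (hp : p.degree < K) (hq : q.degree < K) (hpq : p ≠ q) :
    #{j | p.eval (x j) = q.eval (x j)} ≤ K - 1 := by
  have hdeg : (p - q).natDegree < K :=
    (natDegree_lt_iff_degree_lt (sub_ne_zero.2 hpq)).2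
      ((degree_sub_le p q).trans_lt (max_lt hp hq))
  have := card_filter_eval_eq_le_natDegree_sub hx hpq
  omega

end ReedSolomon

theorem card_filter_exists_le_sum {ι κ : Type*} [Fintype ι] [Fintype κ] (P : κ → ι → Prop)
    [∀ i, DecidablePred (P i)] [DecidablePred fun j => ∃ i, P i j] :
    #{j | ∃ i, P i j} ≤ ∑ i, #{j | P i j} := by
  classical
  calc #{j | ∃ i, P i j} ≤ #(univ.biUnion fun i => ({j | P i j} : Finset ι)) :=
        card_le_card fun j hj => by simpa using hj
    _ ≤ ∑ i, #{j | P i j} := card_biUnion_le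

theorem card_filter_graph_eq {ι β : Type*} [Fintype ι] [Fintype β] [DecidableEq β]
    (v : ι → β) (P : ι → β → Prop) [∀ j, DecidablePred (P j)] :
    #{aj : β × ι | v aj.2 = aj.1 ∧ P aj.2 aj.1} = #{j | P j (v j)} := by
  refine card_nbij' Prod.snd (fun j => (v j, j)) ?_ ?_ ?_ ?_
  · intro aj haj
    simp only [coe_filter, mem_univ, true_and, Set.mem_ofPred_eq] at haj ⊢
    exact haj.1 ▸ haj.2
  · intro j hj
    simpa using hj
  · rintro ⟨a, j⟩ haj
    simp only [coe_filter, mem_univ, true_and, Set.mem_ofPred_eq] at haj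
    simp [haj.1]
  · intro j _
    rfl

theorem stmt7_general (F : Type) [Field F] [Fintype F] [DecidableEq F]
    (K N t : ℕ)
    (x : Fin N → F) (hx : Function.Injective x)
    (f : Fin t → Polynomial F) (hf : ∀ i, (f i).degree < K)
    (c : Fin t → Fin N → F) (hc : ∀ i j, c i j = Polynomial.eval (x j) (f i))
    (W : (Fin N → F) → F → Fin N → ℕ)
    (hW : ∀ (cw : Fin N → F) (α : F) (j : Fin N), W cw α j = if cw j = α then 1 else 0)
    (Y : F → Fin N → ℕ)
    (hY : ∀ (α : F) (j : Fin N), Y α j = if ∃ i, c i j = α then 1 else 0)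
    (g : Polynomial F) (hg : g.degree < K)
    (cg : Fin N → F) (hcg : ∀ j, cg j = Polynomial.eval (x j) g)
    (hnot : ∀ i, cg ≠ c i) :
    ((Finset.univ.filter
        (fun aj : F × Fin N => W cg aj.1 aj.2 ≠ 0 ∧ Y aj.1 aj.2 ≠ 0)).card
      ≤ t * (K - 1)) ∧
    (∑ α : F, ∑ j : Fin N, W cg α j * Y α j) ≤ t * (K - 1) := by
  have hagree (i : Fin t) : #{j | c i j = cg j} ≤ K - 1 := by
    have hne : f i ≠ g := fun h => hnot i (funext fun j => by rw [hc, hcg, h])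
    simpa only [hc, hcg] using card_filter_eval_eq_le_of_degree_lt hx (hf i) hg hne
  have hsupp : #{aj : F × Fin N | cg aj.2 = aj.1 ∧ ∃ i, c i aj.2 = aj.1} ≤ t * (K - 1) := by
    rw [card_filter_graph_eq cg fun j α => ∃ i, c i j = α]
    calc #{j | ∃ i, c i j = cg j} ≤ ∑ i, #{j | c i j = cg j} := card_filter_exists_le_sum _
      _ ≤ ∑ _i : Fin t, (K - 1) := sum_le_sum fun i _ => hagree i
      _ = t * (K - 1) := by simp
  simp only [hW, hY, ne_eq, ite_eq_right_iff, one_ne_zero, imp_false, not_not,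
    ite_zero_mul_ite_zero, mul_one]
  refine ⟨hsupp, ?_⟩
  rwa [← Fintype.sum_prod_type' (fun α j => if cg j = α ∧ ∃ i, c i j = α then 1 else 0),
    ← card_filter]

/-- Lemma 2: If `c̄` is the Reed–Solomon codeword of a polynomial of
degree `< K` and `c̄ ∉ {c⁽¹⁾, …, c⁽ᵗ⁾}`, then the support of the Kautz–Singleton
codeword `W_c̄` meets the support of the indicator matrix `Y` in at most `t(K−1)`
positions; equivalently `⟨W_c̄, Y⟩ ≤ t(K−1)`. -/
theorem stmt7 (F : Type) [Field F] [Fintype F] [DecidableEq F]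
    (K N t : ℕ) (hK : 1 ≤ K)
    (x : Fin N → F) (hx : Function.Injective x)
    (f : Fin t → Polynomial F) (hf : ∀ i, (f i).degree < K)
    (c : Fin t → Fin N → F) (hc : ∀ i j, c i j = Polynomial.eval (x j) (f i))
    (W : (Fin N → F) → F → Fin N → ℕ)
    (hW : ∀ (cw : Fin N → F) (α : F) (j : Fin N), W cw α j = if cw j = α then 1 else 0)
    (Y : F → Fin N → ℕ)
    (hY : ∀ (α : F) (j : Fin N), Y α j = if ∃ i, c i j = α then 1 else 0)
    (g : Polynomial F) (hg : g.degree < K)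
    (cg : Fin N → F) (hcg : ∀ j, cg j = Polynomial.eval (x j) g)
    (hnot : ∀ i, cg ≠ c i) :
    ((Finset.univ.filter
        (fun aj : F × Fin N => W cg aj.1 aj.2 ≠ 0 ∧ Y aj.1 aj.2 ≠ 0)).card
      ≤ t * (K - 1)) ∧
    (∑ α : F, ∑ j : Fin N, W cg α j * Y α j) ≤ t * (K - 1) :=
  stmt7_general F K N t x hx f hf c hc W hW Y hY g hg cg hcg hnot
end

section
/- (Noiseless separation/identifiability, eq. (8).) Let f_1, …, f_t be polynomials of degree < K with Reed–Solomon codewords c^(1), …, c^(t), let Y be their indicator matrix, and let M = d·Y for a positive integer d. Suppose t·(K−1) ≤ N−1. Then for every polynomial g of degree < K: ⟨W_{c_g}, M⟩ ≥ dN if and only if c_g ∈ {c^(1), …, c^(t)}; moreover, if c_g ∉ {c^(1), …, c^(t)} then ⟨W_{c_g}, M⟩ ≤ d·t·(K−1) < dN. -/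
/-!
Two distinct polynomials of degree `< K` agree on at most `K - 1` of the distinct evaluation
points, so a codeword `c_g` that is not among the `c⁽ⁱ⁾` meets the support of `Y` in at most
`t (K - 1) < N` positions. Since `⟨W_{c_g}, M⟩` is `d` times the number of positions `j` with
`Y (c_g j) j = 1`, it equals `dN` for a listed codeword and is at most `d t (K - 1) < dN` otherwise.
-/

open Finset Polynomial

section

variable {R ι σ : Type*} [CommRing R] [IsDomain R] [DecidableEq R] [Fintype ι] [Fintype σ]

theorem Polynomial.card_eval_eq_le_of_ne {K : ℕ} {v : ι → R} (hv : Function.Injective v)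
    {p q : R[X]} (hp : p.degree < K) (hq : q.degree < K) (hpq : p ≠ q) :
    #{j | p.eval (v j) = q.eval (v j)} ≤ K - 1 := by
  by_contra! h
  have hK : (K : WithBot ℕ) ≤ #{j | p.eval (v j) = q.eval (v j)} := by exact_mod_cast (by omega)
  exact hpq <| eq_of_degrees_lt_of_eval_index_eq _ hv.injOn (hp.trans_le hK) (hq.trans_le hK)
    fun j hj => (mem_filter.1 hj).2

theorem Polynomial.card_exists_eval_eq_le {K : ℕ} {v : ι → R} (hv : Function.Injective v)
    {f : σ → R[X]} {g : R[X]} (hf : ∀ i, (f i).degree < K) (hg : g.degree < K)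
    (hfg : ∀ i, f i ≠ g) :
    #{j | ∃ i, (f i).eval (v j) = g.eval (v j)} ≤ Fintype.card σ * (K - 1) := by
  classical
  calc #{j | ∃ i, (f i).eval (v j) = g.eval (v j)}
      ≤ #(univ.biUnion fun i => {j | (f i).eval (v j) = g.eval (v j)}) :=
        card_le_card fun j hj => by simpa using hj
    _ ≤ #(univ : Finset σ) * (K - 1) :=
        card_biUnion_le_card_mul _ _ _ fun i _ => card_eval_eq_le_of_ne hv (hf i) hg (hfg i)
    _ = Fintype.card σ * (K - 1) := by rw [card_univ]

end

theorem sum_indicator_mul_indicator_eq {F ι : Type*} [Fintype F] [DecidableEq F] [Fintype ι]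
    (cw : ι → F) (P : ι → F → Prop) [∀ j α, Decidable (P j α)] (d : ℕ) :
    ∑ α : F, ∑ j : ι, (if cw j = α then 1 else 0) * (d * if P j α then 1 else 0) =
      d * #{j | P j (cw j)} := by
  simp only [sum_comm (γ := F), boole_mul, sum_ite_eq, mem_univ, if_true, card_eq_sum_ones,
    sum_filter, mul_sum, mul_boole]

theorem stmt11_general (F : Type) [Field F] [Fintype F] [DecidableEq F]
    (K N t : ℕ) (hN : 1 ≤ N)
    (x : Fin N → F) (hx : Function.Injective x)
    (f : Fin t → Polynomial F) (hf : ∀ i, (f i).degree < K)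
    (c : Fin t → Fin N → F) (hc : ∀ i j, c i j = Polynomial.eval (x j) (f i))
    (W : (Fin N → F) → F → Fin N → ℕ)
    (hW : ∀ (cw : Fin N → F) (α : F) (j : Fin N), W cw α j = if cw j = α then 1 else 0)
    (Y : F → Fin N → ℕ)
    (hY : ∀ (α : F) (j : Fin N), Y α j = if ∃ i, c i j = α then 1 else 0)
    (d : ℕ) (hd : 1 ≤ d)
    (htK : t * (K - 1) ≤ N - 1) :
    ∀ (g : Polynomial F), g.degree < K →
      ∀ (cg : Fin N → F), (∀ j, cg j = Polynomial.eval (x j) g) →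
        ((d * N ≤ ∑ α : F, ∑ j : Fin N, W cg α j * (d * Y α j)) ↔ ∃ i, cg = c i) ∧
        ((¬ ∃ i, cg = c i) →
          (∑ α : F, ∑ j : Fin N, W cg α j * (d * Y α j)) ≤ d * (t * (K - 1)) ∧
          d * (t * (K - 1)) < d * N) := by
  intro g hg cg hcg
  simp only [hW, hY]
  rw [sum_indicator_mul_indicator_eq cg fun j α => ∃ i, c i j = α]
  by_cases hlisted : ∃ i, cg = c i
  · obtain ⟨i, rfl⟩ := hlisted
    have hall : #{j | ∃ i', c i' j = c i j} = N := by
      rw [filter_true_of_mem fun j _ => ⟨i, rfl⟩, card_univ, Fintype.card_fin]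
    rw [hall]
    exact ⟨iff_of_true le_rfl ⟨i, rfl⟩, fun hunlisted => absurd ⟨i, rfl⟩ hunlisted⟩
  · have hne : ∀ i, f i ≠ g := fun i hfg =>
      hlisted ⟨i, funext fun j => by rw [hcg, hc, hfg]⟩
    have hcard : #{j | ∃ i, c i j = cg j} ≤ t * (K - 1) := by
      convert card_exists_eval_eq_le hx hf hg hne using 2
      · ext j; simp [hc, hcg]
      · rw [Fintype.card_fin]
    have hlt : d * (t * (K - 1)) < d * N := Nat.mul_lt_mul_of_pos_left (by omega) hd
    exact ⟨iff_of_false (not_le.2 ((Nat.mul_le_mul_left d hcard).trans_lt hlt)) hlisted,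
      fun _ => ⟨Nat.mul_le_mul_left d hcard, hlt⟩⟩

/-- noiseless separation/identifiability, eq. (8): If
`t(K−1) ≤ N−1`, then for every polynomial `g` of degree `< K`:
`⟨W_{c_g}, M⟩ ≥ dN` iff `c_g ∈ {c⁽¹⁾, …, c⁽ᵗ⁾}`; moreover if
`c_g ∉ {c⁽¹⁾, …, c⁽ᵗ⁾}` then `⟨W_{c_g}, M⟩ ≤ d·t·(K−1) < dN`. -/
theorem stmt11 (F : Type) [Field F] [Fintype F] [DecidableEq F]
    (K N t : ℕ) (hK : 1 ≤ K) (hN : 1 ≤ N)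
    (x : Fin N → F) (hx : Function.Injective x)
    (f : Fin t → Polynomial F) (hf : ∀ i, (f i).degree < K)
    (c : Fin t → Fin N → F) (hc : ∀ i j, c i j = Polynomial.eval (x j) (f i))
    (W : (Fin N → F) → F → Fin N → ℕ)
    (hW : ∀ (cw : Fin N → F) (α : F) (j : Fin N), W cw α j = if cw j = α then 1 else 0)
    (Y : F → Fin N → ℕ)
    (hY : ∀ (α : F) (j : Fin N), Y α j = if ∃ i, c i j = α then 1 else 0)
    (d : ℕ) (hd : 1 ≤ d)
    (htK : t * (K - 1) ≤ N - 1) :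
    ∀ (g : Polynomial F), g.degree < K →
      ∀ (cg : Fin N → F), (∀ j, cg j = Polynomial.eval (x j) g) →
        ((d * N ≤ ∑ α : F, ∑ j : Fin N, W cg α j * (d * Y α j)) ↔ ∃ i, cg = c i) ∧
        ((¬ ∃ i, cg = c i) →
          (∑ α : F, ∑ j : Fin N, W cg α j * (d * Y α j)) ≤ d * (t * (K - 1)) ∧
          d * (t * (K - 1)) < d * N) :=
  stmt11_general F K N t hN x hx f hf c hc W hW Y hY d hd htK
end

section
/- (Spurious codewords' upper bound under noisy histograms; unnumbered lemma of Section IV-B2.) Let f_1, …, f_t be polynomials of degree < K with Reed–Solomon codewords c^(1), …, c^(t), and let H ∈ ℕ^{F_q × N} be their histogram matrix. Let r, s, e be nonnegative integers, let Z₁, Z₂ ⊆ [N] be disjoint sets with |Z₁| = e and |Z₂| ≤ s − e, and let H' ∈ ℕ^{F_q × N} satisfy: H'_j = H_j (equal j-th columns) for every j ∉ Z₁ ∪ Z₂, and d_1(H'_j, H_j) = Σ_α |H'(α,j) − H(α,j)| ≤ r for every j ∈ Z₂. Define Y' ∈ {0,1}^{F_q × N} by: the j-th column of Y' is all-zero for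 j ∈ Z₁, and Y'(α, j) = 1 iff H'(α, j) > 0 for j ∉ Z₁; let M' = d·Y' for a positive integer d. Then for every polynomial ḡ of degree < K with c_ḡ ∉ {c^(1), …, c^(t)}: ⟨W_{c_ḡ}, M'⟩ ≤ d·(t(K−1) + r(s−e)). -/
/-- spurious codewords' upper bound under noisy histograms: In the
noisy-histogram setting (`|Z₁| = e`, `|Z₂| ≤ s−e`, `H'` equals the histogram matrix
`H` outside `Z₁ ∪ Z₂` and deviates by at most `r` in ℓ1-distance on columns of `Z₂`;
`Y'` has zero columns on `Z₁` and indicates positivity of `H'` elsewhere; `M' = d·Y'`),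
every polynomial `ḡ` of degree `< K` with `c_ḡ ∉ {c⁽¹⁾, …, c⁽ᵗ⁾}` satisfies
`⟨W_{c_ḡ}, M'⟩ ≤ d(t(K−1) + r(s−e))`. -/
theorem stmt13 (F : Type) [Field F] [Fintype F] [DecidableEq F]
    (K N t : ℕ) (hK : 1 ≤ K)
    (x : Fin N → F) (hx : Function.Injective x)
    (f : Fin t → Polynomial F) (hf : ∀ i, (f i).degree < K)
    (c : Fin t → Fin N → F) (hc : ∀ i j, c i j = Polynomial.eval (x j) (f i))
    (H : F → Fin N → ℕ)
    (hH : ∀ (α : F) (j : Fin N),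
      H α j = (Finset.univ.filter (fun i : Fin t => c i j = α)).card)
    (r s e : ℕ)
    (Z1 Z2 : Finset (Fin N)) (hdisj : Disjoint Z1 Z2)
    (hZ1 : Z1.card = e) (hZ2 : (Z2.card : ℤ) ≤ (s : ℤ) - (e : ℤ))
    (H' : F → Fin N → ℕ)
    (hHeq : ∀ j ∉ Z1 ∪ Z2, ∀ α : F, H' α j = H α j)
    (hHd1 : ∀ j ∈ Z2, (∑ α : F, ((H' α j : ℤ) - (H α j : ℤ)).natAbs) ≤ r)
    (Y' : F → Fin N → ℕ)
    (hY'Z1 : ∀ j ∈ Z1, ∀ α : F, Y' α j = 0)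
    (hY'out : ∀ j ∉ Z1, ∀ α : F, Y' α j = if 0 < H' α j then 1 else 0)
    (d : ℕ) (hd : 1 ≤ d)
    (W : (Fin N → F) → F → Fin N → ℕ)
    (hW : ∀ (cw : Fin N → F) (α : F) (j : Fin N), W cw α j = if cw j = α then 1 else 0)
    (g : Polynomial F) (hg : g.degree < K)
    (cg : Fin N → F) (hcg : ∀ j, cg j = Polynomial.eval (x j) g)
    (hnot : ∀ i, cg ≠ c i) :
    ((∑ α : F, ∑ j : Fin N, W cg α j * (d * Y' α j) : ℕ) : ℤ)
      ≤ (d : ℤ) * ((t : ℤ) * ((K : ℤ) - 1) + (r : ℤ) * ((s : ℤ) - (e : ℤ))) := by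
  classical
  -- Step 1: simplify the inner product
  have hsum : (∑ α : F, ∑ j : Fin N, W cg α j * (d * Y' α j))
      = d * ∑ j : Fin N, Y' (cg j) j := by
    rw [Finset.sum_comm, Finset.mul_sum]
    refine Finset.sum_congr rfl fun j _ => ?_
    calc ∑ α : F, W cg α j * (d * Y' α j)
        = ∑ α : F, if cg j = α then d * Y' α j else 0 := by
          refine Finset.sum_congr rfl fun α _ => ?_
          rw [hW]; split <;> simp
      _ = d * Y' (cg j) j := by rw [Finset.sum_ite_eq]; simp
  -- Step 2: agreement bound per codeword
  have hagree : ∀ i : Fin t,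
      (Finset.univ.filter (fun j : Fin N => c i j = cg j)).card ≤ K - 1 := by
    intro i
    set p := g - f i with hp
    have hpne : p ≠ 0 := by
      intro h0
      have hgf : g = f i := sub_eq_zero.mp h0
      exact hnot i (funext fun j => by rw [hcg, hc, hgf])
    have hdegK : p.degree < (K : ℕ) := by
      calc p.degree ≤ max g.degree (f i).degree := Polynomial.degree_sub_le _ _
        _ < (K : ℕ) := max_lt hg (hf i)
    have hnd : p.natDegree ≤ K - 1 :=
      Nat.le_sub_one_of_lt ((Polynomial.natDegree_lt_iff_degree_lt hpne).mpr hdegK)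
    have hsub : (Finset.univ.filter (fun j : Fin N => c i j = cg j)).image x
        ⊆ p.roots.toFinset := by
      intro y hy
      rcases Finset.mem_image.mp hy with ⟨j, hj, rfl⟩
      have hcij : c i j = cg j := (Finset.mem_filter.mp hj).2
      have : p.eval (x j) = 0 := by
        simp [hp, Polynomial.eval_sub, ← hcg j, ← hc i j, hcij]
      simp [Multiset.mem_toFinset, Polynomial.mem_roots hpne, Polynomial.IsRoot, this]
    calc (Finset.univ.filter (fun j : Fin N => c i j = cg j)).card
        = ((Finset.univ.filter (fun j : Fin N => c i j = cg j)).image x).card :=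
          (Finset.card_image_of_injective _ hx).symm
      _ ≤ p.roots.toFinset.card := Finset.card_le_card hsub
      _ ≤ Multiset.card p.roots := Multiset.toFinset_card_le _
      _ ≤ p.natDegree := Polynomial.card_roots' p
      _ ≤ K - 1 := hnd
  -- Step 3: the set of agreeing positions
  have hA : (Finset.univ.filter (fun j : Fin N => ∃ i, c i j = cg j)).card ≤ t * (K - 1) := by
    have hsub : (Finset.univ.filter (fun j : Fin N => ∃ i, c i j = cg j))
        ⊆ Finset.univ.biUnion (fun i : Fin t =>
            Finset.univ.filter (fun j : Fin N => c i j = cg j)) := by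
      intro j hj
      rcases (Finset.mem_filter.mp hj).2 with ⟨i, hi⟩
      exact Finset.mem_biUnion.mpr ⟨i, Finset.mem_univ i, Finset.mem_filter.mpr ⟨Finset.mem_univ j, hi⟩⟩
    calc (Finset.univ.filter (fun j : Fin N => ∃ i, c i j = cg j)).card
        ≤ (Finset.univ.biUnion (fun i : Fin t =>
            Finset.univ.filter (fun j : Fin N => c i j = cg j))).card :=
          Finset.card_le_card hsub
      _ ≤ ∑ i : Fin t, (Finset.univ.filter (fun j : Fin N => c i j = cg j)).card :=
          Finset.card_biUnion_le
      _ ≤ ∑ _i : Fin t, (K - 1) := Finset.sum_le_sum fun i _ => hagree i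
      _ = t * (K - 1) := by simp [Finset.sum_const, Finset.card_univ]
  -- Step 4: pointwise bound on Y'
  have hpt : ∀ j : Fin N, Y' (cg j) j ≤
      (if ∃ i, c i j = cg j then 1 else 0) + (if j ∈ Z2 then r else 0) := by
    intro j
    have hHpos : (0 < H (cg j) j) ↔ ∃ i, c i j = cg j := by
      rw [hH, Finset.card_pos]
      constructor
      · rintro ⟨i, hi⟩; exact ⟨i, (Finset.mem_filter.mp hi).2⟩
      · rintro ⟨i, hi⟩; exact ⟨i, Finset.mem_filter.mpr ⟨Finset.mem_univ i, hi⟩⟩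
    by_cases hj1 : j ∈ Z1
    · simp [hY'Z1 j hj1]
    by_cases hj2 : j ∈ Z2
    · rw [hY'out j hj1]
      by_cases hpos : 0 < H (cg j) j
      · simp only [hHpos.mp hpos, if_true]
        split <;> omega
      · -- H (cg j) j = 0
        have hH0 : H (cg j) j = 0 := by omega
        by_cases hpos' : 0 < H' (cg j) j
        · have h1 : 1 ≤ ((H' (cg j) j : ℤ) - (H (cg j) j : ℤ)).natAbs := by
            rw [hH0]; omega
          have h2 : ((H' (cg j) j : ℤ) - (H (cg j) j : ℤ)).natAbs
              ≤ ∑ α : F, ((H' α j : ℤ) - (H α j : ℤ)).natAbs :=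
            Finset.single_le_sum (f := fun α => ((H' α j : ℤ) - (H α j : ℤ)).natAbs)
              (fun α _ => Nat.zero_le _) (Finset.mem_univ (cg j))
          have hr1 : 1 ≤ r := le_trans h1 (le_trans h2 (hHd1 j hj2))
          simp only [hpos', if_true, hj2]
          split <;> omega
        · simp [hpos']
    · rw [hY'out j hj1, hHeq j (by simp [hj1, hj2])]
      by_cases hpos : 0 < H (cg j) j
      · simp [hpos, hHpos.mp hpos]
      · simp [hpos]
  -- Step 5: sum bound in ℕ
  have hS : (∑ j : Fin N, Y' (cg j) j) ≤ t * (K - 1) + r * Z2.card := by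
    calc (∑ j : Fin N, Y' (cg j) j)
        ≤ ∑ j : Fin N, ((if ∃ i, c i j = cg j then 1 else 0) + (if j ∈ Z2 then r else 0)) :=
          Finset.sum_le_sum fun j _ => hpt j
      _ = (∑ j : Fin N, (if ∃ i, c i j = cg j then 1 else 0))
            + ∑ j : Fin N, (if j ∈ Z2 then r else 0) := Finset.sum_add_distrib
      _ ≤ t * (K - 1) + r * Z2.card := by
          gcongr
          · rw [← Finset.card_filter]
            exact hA
          · rw [Finset.sum_ite_mem]
            simp [Finset.univ_inter, Finset.sum_const, Nat.mul_comm]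
  -- Step 6: conclude over ℤ
  rw [hsum, Nat.cast_mul]
  have hKZ : ((K : ℤ) - 1) = ((K - 1 : ℕ) : ℤ) := by
    have := hK; push_cast [Nat.cast_sub hK]; ring
  have hSZ : ((∑ j : Fin N, Y' (cg j) j : ℕ) : ℤ)
      ≤ (t : ℤ) * ((K : ℤ) - 1) + (r : ℤ) * ((s : ℤ) - (e : ℤ)) := by
    have h1 : ((∑ j : Fin N, Y' (cg j) j : ℕ) : ℤ)
        ≤ ((t * (K - 1) + r * Z2.card : ℕ) : ℤ) := by exact_mod_cast hS
    have h2 : ((t * (K - 1) + r * Z2.card : ℕ) : ℤ)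
        = (t : ℤ) * ((K - 1 : ℕ) : ℤ) + (r : ℤ) * (Z2.card : ℤ) := by push_cast; ring
    have h3 : (r : ℤ) * (Z2.card : ℤ) ≤ (r : ℤ) * ((s : ℤ) - (e : ℤ)) := by
      exact mul_le_mul_of_nonneg_left hZ2 (by positivity)
    rw [hKZ]; omega
  calc (d : ℤ) * ((∑ j : Fin N, Y' (cg j) j : ℕ) : ℤ)
      ≤ (d : ℤ) * ((t : ℤ) * ((K : ℤ) - 1) + (r : ℤ) * ((s : ℤ) - (e : ℤ))) := by
        exact mul_le_mul_of_nonneg_left hSZ (by positivity)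
end

section
/- (Noisy separation/identifiability; core of Theorem 1.) Let f_1, …, f_t, H, r, s, e, Z₁, Z₂, H', Y', and M' = d·Y' be as in the noisy-histogram setting, and assume additionally that t(K−1) + r(s−e) < N − s. Then for every polynomial g of degree < K: ⟨W_{c_g}, M'⟩ ≥ d·(N − s) if and only if c_g ∈ {c^(1), …, c^(t)}. Consequently, thresholding the inner product with M' at d(N−s) exactly identifies the set of superimposed Reed–Solomon codewords. -/
/-!
The inner product counts positions: `⟨W_{c_g}, M'⟩ = d · #S`, where `S` is
the set of uncorrupted positions `j ∉ Z₁` at which the symbol `g(x_j)` occurs in the noisy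
histogram `H'`. If `c_g` is one of the superimposed codewords, then every position outside
`Z₁ ∪ Z₂` lies in `S`, so `#S ≥ N − s`. Otherwise each position of `S` either carries a symbol
of some `c⁽ⁱ⁾`, and two distinct polynomials of degree `< K` agree in at most `K − 1` points, or
is a position of `Z₂` where the noise created the symbol, and each such position spends at least
one unit of the `ℓ¹`-budget `r`; hence `#S ≤ t(K − 1) + r(s − e) < N − s`.
-/

open Finset Polynomial

theorem Polynomial.card_filter_eval_eq_lt {R ι : Type*} [CommRing R] [IsDomain R] [DecidableEq R]
    [Fintype ι] {x : ι → R} (hx : Function.Injective x) {p q : R[X]} {K : ℕ}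
    (hp : p.degree < K) (hq : q.degree < K) (hpq : p ≠ q) :
    #{j | p.eval (x j) = q.eval (x j)} < K := by
  by_contra! hK
  set s := ({j | p.eval (x j) = q.eval (x j)} : Finset ι).image x
  have hs : K ≤ #s := by rwa [card_image_of_injective _ hx]
  refine hpq (eq_of_degrees_lt_of_eval_finset_eq s (hp.trans_le (by exact_mod_cast hs))
    (hq.trans_le (by exact_mod_cast hs)) ?_)
  simp only [s, mem_image, mem_filter, mem_univ, true_and]
  rintro _ ⟨j, hj, rfl⟩
  exact hj

theorem card_filter_exists_eval_eq_le {R ι : Type*} [CommRing R] [IsDomain R] [DecidableEq R]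
    [Fintype ι] [DecidableEq ι] {x : ι → R} (hx : Function.Injective x) {t K : ℕ}
    {f : Fin t → R[X]} (hf : ∀ i, (f i).degree < K) {g : R[X]} (hg : g.degree < K)
    (hne : ∀ i, g ≠ f i) :
    (#{j | ∃ i, (f i).eval (x j) = g.eval (x j)} : ℤ) ≤ t * (K - 1) := by
  have hcover : ({j | ∃ i, (f i).eval (x j) = g.eval (x j)} : Finset ι) =
      univ.biUnion fun i => {j | (f i).eval (x j) = g.eval (x j)} := by
    ext j; simp
  have hcard : ∀ i, (#{j | (f i).eval (x j) = g.eval (x j)} : ℤ) ≤ K - 1 := fun i => by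
    have := card_filter_eval_eq_lt hx (hf i) hg (hne i).symm
    omega
  calc (#{j | ∃ i, (f i).eval (x j) = g.eval (x j)} : ℤ)
      ≤ ∑ i, (#{j | (f i).eval (x j) = g.eval (x j)} : ℤ) := by
        rw [hcover]; exact_mod_cast card_biUnion_le
    _ ≤ ∑ _i : Fin t, ((K : ℤ) - 1) := sum_le_sum fun i _ => hcard i
    _ = t * (K - 1) := by rw [sum_const, card_univ, Fintype.card_fin, nsmul_eq_mul]

theorem card_filter_eq_zero_and_pos_le {ι F : Type*} [Fintype F] {Z : Finset ι} {H H' : F → ι → ℕ}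
    {r : ℕ} (hdist : ∀ j ∈ Z, (∑ α, ((H' α j : ℤ) - (H α j : ℤ)).natAbs) ≤ r) (a : ι → F) :
    #{j ∈ Z | H (a j) j = 0 ∧ 0 < H' (a j) j} ≤ r * #Z := by
  set dist : ι → ℕ := fun j => ∑ α, ((H' α j : ℤ) - (H α j : ℤ)).natAbs
  have hone : ∀ j ∈ ({j ∈ Z | H (a j) j = 0 ∧ 0 < H' (a j) j} : Finset ι), 1 ≤ dist j := by
    intro j hj
    obtain ⟨-, hH, hH'⟩ := mem_filter.mp hj
    calc 1 ≤ ((H' (a j) j : ℤ) - (H (a j) j : ℤ)).natAbs := by omega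
      _ ≤ dist j := single_le_sum (f := fun α => ((H' α j : ℤ) - (H α j : ℤ)).natAbs)
            (fun _ _ => Nat.zero_le _) (mem_univ _)
  calc #{j ∈ Z | H (a j) j = 0 ∧ 0 < H' (a j) j}
      = #{j ∈ Z | H (a j) j = 0 ∧ 0 < H' (a j) j} • 1 := (mul_one _).symm
    _ ≤ ∑ j ∈ Z with H (a j) j = 0 ∧ 0 < H' (a j) j, dist j := card_nsmul_le_sum _ _ _ hone
    _ ≤ ∑ j ∈ Z, dist j := sum_le_sum_of_subset (filter_subset _ _)
    _ ≤ #Z • r := sum_le_card_nsmul _ _ _ hdist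
    _ = r * #Z := mul_comm _ _

theorem filter_pos_subset_union {ι F : Type*} [Fintype ι] [DecidableEq ι] {Z₁ Z₂ : Finset ι}
    {H H' : F → ι → ℕ} (hHeq : ∀ j ∉ Z₁ ∪ Z₂, ∀ α, H' α j = H α j) (a : ι → F) :
    ({j | j ∉ Z₁ ∧ 0 < H' (a j) j} : Finset ι) ⊆
      ({j | 0 < H (a j) j} : Finset ι) ∪ {j ∈ Z₂ | H (a j) j = 0 ∧ 0 < H' (a j) j} := by
  intro j hj
  simp only [mem_filter, mem_univ, true_and, mem_union] at hj ⊢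
  by_cases hjZ₂ : j ∈ Z₂
  · by_cases hH : H (a j) j = 0
    · exact Or.inr ⟨hjZ₂, hH, hj.2⟩
    · exact Or.inl (Nat.pos_of_ne_zero hH)
  · exact Or.inl (hHeq j (by simp [hj.1, hjZ₂]) _ ▸ hj.2)

theorem sum_sum_ite_mul_eq {ι F R : Type*} [Fintype ι] [Fintype F] [DecidableEq F]
    [NonAssocSemiring R] (a : ι → F) (m : F → ι → R) :
    ∑ α, ∑ j, (if a j = α then 1 else 0) * m α j = ∑ j, m (a j) j := by
  rw [sum_comm]
  simp [ite_mul]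

theorem intCast_card_sub_le_card_of_compl_union_subset {ι : Type*} [Fintype ι] [DecidableEq ι]
    {Z₁ Z₂ S : Finset ι} (h : (Z₁ ∪ Z₂)ᶜ ⊆ S) : (Fintype.card ι : ℤ) - (#Z₁ + #Z₂) ≤ #S := by
  have hsize : #(Z₁ ∪ Z₂)ᶜ + #(Z₁ ∪ Z₂) = Fintype.card ι := card_compl_add_card _
  have := card_le_card h
  have := card_union_le Z₁ Z₂
  omega

theorem stmt14_general (F : Type) [Field F] [Fintype F] [DecidableEq F]
    (K N t : ℕ)
    (x : Fin N → F) (hx : Function.Injective x)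
    (f : Fin t → Polynomial F) (hf : ∀ i, (f i).degree < K)
    (c : Fin t → Fin N → F) (hc : ∀ i j, c i j = Polynomial.eval (x j) (f i))
    (H : F → Fin N → ℕ)
    (hH : ∀ (α : F) (j : Fin N),
      H α j = (Finset.univ.filter (fun i : Fin t => c i j = α)).card)
    (r s e : ℕ)
    (Z1 Z2 : Finset (Fin N))
    (hZ1 : Z1.card = e) (hZ2 : (Z2.card : ℤ) ≤ (s : ℤ) - (e : ℤ))
    (H' : F → Fin N → ℕ)
    (hHeq : ∀ j ∉ Z1 ∪ Z2, ∀ α : F, H' α j = H α j)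
    (hHd1 : ∀ j ∈ Z2, (∑ α : F, ((H' α j : ℤ) - (H α j : ℤ)).natAbs) ≤ r)
    (Y' : F → Fin N → ℕ)
    (hY'Z1 : ∀ j ∈ Z1, ∀ α : F, Y' α j = 0)
    (hY'out : ∀ j ∉ Z1, ∀ α : F, Y' α j = if 0 < H' α j then 1 else 0)
    (d : ℕ) (hd : 1 ≤ d)
    (W : (Fin N → F) → F → Fin N → ℕ)
    (hW : ∀ (cw : Fin N → F) (α : F) (j : Fin N), W cw α j = if cw j = α then 1 else 0)
    (hsep : (t : ℤ) * ((K : ℤ) - 1) + (r : ℤ) * ((s : ℤ) - (e : ℤ)) < (N : ℤ) - (s : ℤ)) :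
    ∀ (g : Polynomial F), g.degree < K →
      ∀ (cg : Fin N → F), (∀ j, cg j = Polynomial.eval (x j) g) →
        ((d : ℤ) * ((N : ℤ) - (s : ℤ))
            ≤ ((∑ α : F, ∑ j : Fin N, W cg α j * (d * Y' α j) : ℕ) : ℤ)
          ↔ ∃ i, cg = c i) := by
  intro g hg cg hcg
  have hY : ∀ α j, Y' α j = if j ∉ Z1 ∧ 0 < H' α j then 1 else 0 := fun α j => by
    by_cases hj : j ∈ Z1 <;> simp [hj, hY'Z1, hY'out]
  have hHpos : ∀ α j, 0 < H α j ↔ ∃ i, c i j = α := by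
    simp [hH, Finset.card_pos, Finset.filter_nonempty_iff]
  simp only [hW, sum_sum_ite_mul_eq, ← mul_sum, hY, sum_boole]
  push_cast
  rw [mul_le_mul_iff_right₀ (by exact_mod_cast hd)]
  constructor
  · contrapose!
    intro hne
    have hgf : ∀ i, g ≠ f i := fun i hgi => hne i (funext fun j => by rw [hcg, hc, hgi])
    calc (#{j | j ∉ Z1 ∧ 0 < H' (cg j) j} : ℤ)
        ≤ #{j | 0 < H (cg j) j} + #{j ∈ Z2 | H (cg j) j = 0 ∧ 0 < H' (cg j) j} := by
          exact_mod_cast (card_le_card (filter_pos_subset_union hHeq cg)).trans (card_union_le _ _)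
      _ ≤ t * (K - 1) + r * #Z2 := by
          gcongr
          · simpa [hHpos, hcg, hc] using card_filter_exists_eval_eq_le hx hf hg hgf
          · exact_mod_cast card_filter_eq_zero_and_pos_le hHd1 cg
      _ ≤ t * (K - 1) + r * (s - e) := by gcongr
      _ < N - s := hsep
  · rintro ⟨i, rfl⟩
    have hcompl : (Z1 ∪ Z2)ᶜ ⊆ ({j | j ∉ Z1 ∧ 0 < H' (c i j) j} : Finset (Fin N)) := by
      intro j hj
      rw [mem_compl] at hj
      simp only [mem_filter, mem_univ, true_and, hHeq j hj, hHpos]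
      exact ⟨fun h => hj (mem_union_left _ h), i, rfl⟩
    have := intCast_card_sub_le_card_of_compl_union_subset hcompl
    rw [Fintype.card_fin] at this
    omega

/-- noisy separation/identifiability; core of Theorem 1: In the
noisy-histogram setting, if additionally `t(K−1) + r(s−e) < N − s`, then for every
polynomial `g` of degree `< K`: `⟨W_{c_g}, M'⟩ ≥ d(N − s)` iff
`c_g ∈ {c⁽¹⁾, …, c⁽ᵗ⁾}`. -/
theorem stmt14 (F : Type) [Field F] [Fintype F] [DecidableEq F]
    (K N t : ℕ) (hK : 1 ≤ K)
    (x : Fin N → F) (hx : Function.Injective x)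
    (f : Fin t → Polynomial F) (hf : ∀ i, (f i).degree < K)
    (c : Fin t → Fin N → F) (hc : ∀ i j, c i j = Polynomial.eval (x j) (f i))
    (H : F → Fin N → ℕ)
    (hH : ∀ (α : F) (j : Fin N),
      H α j = (Finset.univ.filter (fun i : Fin t => c i j = α)).card)
    (r s e : ℕ)
    (Z1 Z2 : Finset (Fin N)) (hdisj : Disjoint Z1 Z2)
    (hZ1 : Z1.card = e) (hZ2 : (Z2.card : ℤ) ≤ (s : ℤ) - (e : ℤ))
    (H' : F → Fin N → ℕ)
    (hHeq : ∀ j ∉ Z1 ∪ Z2, ∀ α : F, H' α j = H α j)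
    (hHd1 : ∀ j ∈ Z2, (∑ α : F, ((H' α j : ℤ) - (H α j : ℤ)).natAbs) ≤ r)
    (Y' : F → Fin N → ℕ)
    (hY'Z1 : ∀ j ∈ Z1, ∀ α : F, Y' α j = 0)
    (hY'out : ∀ j ∉ Z1, ∀ α : F, Y' α j = if 0 < H' α j then 1 else 0)
    (d : ℕ) (hd : 1 ≤ d)
    (W : (Fin N → F) → F → Fin N → ℕ)
    (hW : ∀ (cw : Fin N → F) (α : F) (j : Fin N), W cw α j = if cw j = α then 1 else 0)
    (hsep : (t : ℤ) * ((K : ℤ) - 1) + (r : ℤ) * ((s : ℤ) - (e : ℤ)) < (N : ℤ) - (s : ℤ)) :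
    ∀ (g : Polynomial F), g.degree < K →
      ∀ (cg : Fin N → F), (∀ j, cg j = Polynomial.eval (x j) g) →
        ((d : ℤ) * ((N : ℤ) - (s : ℤ))
            ≤ ((∑ α : F, ∑ j : Fin N, W cg α j * (d * Y' α j) : ℕ) : ℤ)
          ↔ ∃ i, cg = c i) :=
  stmt14_general F K N t x hx f hf c hc H hH r s e Z1 Z2 hZ1 hZ2 H' hHeq hHd1 Y' hY'Z1 hY'out d hd W
    hW hsep
end

section
/- (Impossibility of histogram recovery beyond the strength bound; Example 2 generalized.) Let F_q be a finite field with q ≥ 2, let K = 2, and let the Reed–Solomon code of length N = q be given by evaluating polynomials of degree < 2 at all elements of F_q. Consider the two families of q codewords each: A = {c_{f_α} : α ∈ F_q} with f_α = α (constant polynomials), and B = {c_{g_α} : α ∈ F_q} with g_α = α + X. Then (i) A and B are disjoint sets of codewords, and (ii) A and B induce identical coordinate-wise histograms: for every evaluation point β ∈ F_q and every symbol γ ∈ F_q, |{α ∈ F_q : f_α(β) = γ}| = 1 = |{α ∈ F_q : g_α(β) = γ}|. Hence two distinct collections of q = ⌊(N−1)/(K−1)⌋ + 1 codewords are indistinguishable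 from their histograms, so histogram recovery of more than ⌊(N−1)/(K−1)⌋ distinct codewords is information-theoretically impossible in general. -/
/-- impossibility of histogram recovery beyond the strength bound;
Example 2 generalized: For `K = 2` and the Reed–Solomon code of length `N = q`
evaluating degree-`< 2` polynomials at all of `F_q` (`q ≥ 2`), the families
`A = {c_{f_α} : f_α = α}` and `B = {c_{g_α} : g_α = α + X}` (each of q codewords,
since both encodings are injective) are disjoint, yet they induce identical
coordinate-wise histograms: for every evaluation point `β` and symbol `γ`,
`|{α : f_α(β) = γ}| = 1 = |{α : g_α(β) = γ}|`. -/
theorem stmt17 (F : Type) [Field F] [Fintype F] [DecidableEq F]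
    (hq : 2 ≤ Fintype.card F) :
    -- the two families are disjoint sets of codewords
    (∀ α α' : F,
      (fun β : F => Polynomial.eval β (Polynomial.C α))
        ≠ (fun β : F => Polynomial.eval β (Polynomial.C α' + Polynomial.X))) ∧
    -- each family consists of q distinct codewords
    Function.Injective (fun α : F => fun β : F => Polynomial.eval β (Polynomial.C α)) ∧
    Function.Injective
      (fun α : F => fun β : F => Polynomial.eval β (Polynomial.C α + Polynomial.X)) ∧
    -- identical coordinate-wise histograms
    (∀ β γ : F,
      (Finset.univ.filter
        (fun α : F => Polynomial.eval β (Polynomial.C α) = γ)).card = 1 ∧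
      (Finset.univ.filter
        (fun α : F => Polynomial.eval β (Polynomial.C α + Polynomial.X) = γ)).card = 1) := by
  refine ⟨?_, ?_, ?_, ?_⟩
  · intro α α' h
    have h0 := congrFun h 0
    have h1 := congrFun h 1
    simp at h0 h1
    have : (1 : F) ≠ 0 := one_ne_zero
    rw [h0] at h1
    exact this (by linear_combination -h1)
  · intro a b h
    simpa using congrFun h 0
  · intro a b h
    have := congrFun h 0
    simpa using this
  · intro β γ
    constructor
    · rw [Finset.card_eq_one]
      exact ⟨γ, by ext a; simp⟩
    · rw [Finset.card_eq_one]
      exact ⟨γ - β, by ext a; simp; constructor <;> intro h <;> linear_combination h⟩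
end
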